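/- arXiv:1105.1542 — 6 statements merged into one kernel-verified Lean document; each statement's English description precedes it below -/
import Mathlib

section
/- Let U be a diagonal n×n complex matrix with pairwise distinct diagonal entries and V a constant n×n complex matrix. If the system z²dψ/dz = (U - zV)ψ is holomorphically gauge-equivalent near z=0 to the system z²dψ/dz = Uψ, then the diagonal part of V is zero. -/
/-!
At `z = 0` the gauge equation reads `[U, P 0] = 0`, so `P 0` is diagonal because the entries of
`U` are distinct, and its diagonal entries are nonzero because `P 0` is invertible. The diagonal
entries of `U P - P U` vanish identically, so the `(i, i)` entry of the gauge equation is
`z² P'ᵢᵢ = -z (V P)ᵢᵢ`, i.e. `(V P)ᵢᵢ = -z P'ᵢᵢ` for `z ≠ 0`. Since `P` is holomorphic, `P'` is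
continuous, and letting `z → 0` gives `Vᵢᵢ (P 0)ᵢᵢ = (V P 0)ᵢᵢ = 0`.
-/

open Matrix Filter Topology

namespace Matrix

variable {n R : Type*} [Fintype n]

theorem IsDiag.mul_apply_self [NonUnitalNonAssocSemiring R] {A B : Matrix n n R}
    (hB : B.IsDiag) (i : n) : (A * B) i i = A i i * B i i := by
  rw [mul_apply, Finset.sum_eq_single i (fun k _ hk => by rw [hB hk, mul_zero])
    (fun h => absurd (Finset.mem_univ i) h)]

variable [DecidableEq n]

theorem IsDiag.isUnit_apply_self [CommRing R] {A : Matrix n n R} (hd : A.IsDiag)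
    (hA : IsUnit A) (i : n) : IsUnit (A i i) := by
  have hdet : IsUnit (∏ j, A.diag j) := by
    rw [← det_diagonal, hd.diagonal_diag]
    exact (isUnit_iff_isUnit_det A).1 hA
  exact isUnit_of_dvd_unit (Finset.dvd_prod_of_mem A.diag (Finset.mem_univ i)) hdet

theorem isDiag_of_commute_diagonal [CommRing R] [NoZeroDivisors R] {u : n → R}
    (hu : Function.Injective u) {A : Matrix n n R} (h : Commute (diagonal u) A) :
    A.IsDiag := by
  intro i j hij
  have hij' := congr_fun₂ h.eq i j
  rw [diagonal_mul, mul_diagonal] at hij'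
  have hprod : (u i - u j) * A i j = 0 := by linear_combination hij'
  exact (mul_eq_zero.1 hprod).resolve_left (sub_ne_zero.2 (hu.ne hij))

theorem diagonal_sub_smul_mul_sub_mul_diagonal_apply_self [CommRing R] (u : n → R)
    (V A : Matrix n n R) (z : R) (i : n) :
    ((diagonal u - z • V) * A - A * diagonal u) i i = -(z * (V * A) i i) := by
  simp only [sub_apply, sub_mul, diagonal_mul, mul_diagonal, smul_mul, smul_apply, smul_eq_mul]
  ring

end Matrix

theorem eq_zero_of_eventually_eq_sub_smul_deriv {E : Type*} [NormedAddCommGroup E]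
    [NormedSpace ℂ E] [CompleteSpace E] {f g : ℂ → E} {a : ℂ}
    (hf : ∀ᶠ z in 𝓝 a, DifferentiableAt ℂ f z) (hg : ContinuousAt g a)
    (hfg : ∀ᶠ z in 𝓝[≠] a, g z = (z - a) • deriv f z) : g a = 0 := by
  have hf' : ContinuousAt (deriv f) a :=
    (Complex.analyticAt_iff_eventually_differentiableAt.2 hf).deriv.continuousAt
  have hlim : Tendsto (fun z => (z - a) • deriv f z) (𝓝[≠] a) (𝓝 0) := by
    have hcont : ContinuousAt (fun z => (z - a) • deriv f z) a := by fun_prop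
    simpa using hcont.tendsto.mono_left nhdsWithin_le_nhds
  exact tendsto_nhds_unique (hg.tendsto.mono_left nhdsWithin_le_nhds) 
    (hlim.congr' (hfg.mono fun _ h => h.symm))

/-- If `z² dψ/dz = (U - zV)ψ` is holomorphically gauge-equivalent near `z = 0`
to `z² dψ/dz = Uψ`, where `U` is diagonal with pairwise distinct entries, then the diagonal
part of `V` vanishes. -/
theorem statement1 {n : ℕ} (u : Fin n → ℂ) (hu : Function.Injective u)
    (V : Matrix (Fin n) (Fin n) ℂ) (r : ℝ) (hr : 0 < r)
    (P P' : ℂ → Matrix (Fin n) (Fin n) ℂ)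
    (hP : ∀ z ∈ Metric.ball (0 : ℂ) r, ∀ i j,
      HasDerivAt (fun w => P w i j) (P' z i j) z)
    (hPinv : ∀ z ∈ Metric.ball (0 : ℂ) r, IsUnit (P z))
    (hgauge : ∀ z ∈ Metric.ball (0 : ℂ) r,
      (z ^ 2) • P' z = (Matrix.diagonal u - z • V) * P z - P z * Matrix.diagonal u) :
    ∀ i, V i i = 0 := by
  have h0 : (0 : ℂ) ∈ Metric.ball (0 : ℂ) r := Metric.mem_ball_self hr
  have hball : Metric.ball (0 : ℂ) r ∈ 𝓝 0 := Metric.ball_mem_nhds 0 hr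
  have hcomm : diagonal u * P 0 = P 0 * diagonal u := by
    simpa [sub_eq_zero] using (hgauge 0 h0).symm
  have hdiag : (P 0).IsDiag := isDiag_of_commute_diagonal hu hcomm
  intro i
  have hentry : ∀ z ∈ Metric.ball (0 : ℂ) r, z ≠ 0 → -(V * P z) i i = z * P' z i i := by
    intro z hz hz0
    have h := congr_fun₂ (hgauge z hz) i i
    rw [diagonal_sub_smul_mul_sub_mul_diagonal_apply_self, Matrix.smul_apply, smul_eq_mul] at h
    exact mul_left_cancel₀ hz0 (by linear_combination -h)
  have hVP : -(V * P 0) i i = 0 := by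
    refine eq_zero_of_eventually_eq_sub_smul_deriv (f := fun z => P z i i)
      (g := fun z => -(V * P z) i i)
      (mem_of_superset hball fun z hz => (hP z hz i i).differentiableAt) ?_ ?_
    · have hPc : ∀ k, ContinuousAt (fun z => P z k i) 0 := fun k => (hP 0 h0 k i).continuousAt
      simp only [mul_apply]
      fun_prop
    · filter_upwards [self_mem_nhdsWithin, nhdsWithin_le_nhds hball] with z hz0 hz
      rw [sub_zero, (hP z hz i i).deriv, smul_eq_mul]
      exact hentry z hz hz0
  rw [neg_eq_zero, hdiag.mul_apply_self] at hVP
  exact (mul_eq_zero.1 hVP).resolve_right (hdiag.isUnit_apply_self (hPinv 0 h0) i).ne_zero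
end

section
/- Let U be a diagonal n×n complex matrix with pairwise distinct diagonal entries u₁,...,uₙ, and let Ĉ(z) be an n×n matrix of formal power series in z. Then the system with connection matrix (U + z²Ĉ(z))dz/z² is formally gauge-equivalent to the system with matrix U dz/z². In particular, the formal normal form has no logarithmic (dz/z) term. -/
open Matrix Finset

noncomputable def Pmat {n : ℕ} (u : Fin n → ℂ) (C : ℕ → Matrix (Fin n) (Fin n) ℂ) :
    ℕ → Matrix (Fin n) (Fin n) ℂ
  | 0 => 1
  | (k+1) => Matrix.of fun a b =>
      if a = b then
        (∑ j ∈ Finset.range (k+1), (C j * Pmat u C (k - j)) a a) / ((k : ℂ) + 1)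
      else
        ((k : ℂ) * Pmat u C k a b
          - ∑ j ∈ Finset.range k, (C j * Pmat u C (k - 1 - j)) a b) / (u a - u b)
  decreasing_by all_goals omega

lemma Pmat_diag {n : ℕ} (u : Fin n → ℂ) (C : ℕ → Matrix (Fin n) (Fin n) ℂ)
    (k : ℕ) (a : Fin n) :
    (k : ℂ) * Pmat u C k a a = ∑ j ∈ Finset.range k, (C j * Pmat u C (k - 1 - j)) a a := by
  cases k with
  | zero => simp
  | succ m =>
      have h1 : ((m : ℂ) + 1) ≠ 0 := Nat.cast_add_one_ne_zero m
      have : Pmat u C (m + 1) a a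
          = (∑ j ∈ Finset.range (m+1), (C j * Pmat u C (m - j)) a a) / ((m : ℂ) + 1) := by
        rw [Pmat]; simp
      rw [this]
      push_cast
      rw [mul_div_cancel₀ _ h1]

/-- For `U` diagonal with pairwise distinct entries and any formal matrix
`Ĉ(z) = Σ C_k z^k`, the system `(U + z²Ĉ(z))dz/z²` is formally gauge-equivalent to
`U dz/z²`: there is `P(z) ∈ GL_n(ℂ[[z]])` with `z² dP/dz = (U + z²Ĉ(z))P - PU`,
written coefficientwise: `U·P₀ = P₀·U` and, for all `k`,
`k • P_k = U·P_{k+1} - P_{k+1}·U + Σ_{j<k} C_j·P_{k-1-j}`. -/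
theorem statement3 {n : ℕ} (u : Fin n → ℂ) (hu : Function.Injective u)
    (C : ℕ → Matrix (Fin n) (Fin n) ℂ) :
    ∃ P : ℕ → Matrix (Fin n) (Fin n) ℂ, IsUnit (P 0) ∧
      Matrix.diagonal u * P 0 = P 0 * Matrix.diagonal u ∧
      ∀ k : ℕ, (k : ℂ) • P k =
        Matrix.diagonal u * P (k + 1) - P (k + 1) * Matrix.diagonal u
          + ∑ j ∈ Finset.range k, C j * P (k - 1 - j) := by
  have hP0 : Pmat u C 0 = 1 := by rw [Pmat]
  refine ⟨Pmat u C, by rw [hP0]; exact isUnit_one, by rw [hP0, mul_one, one_mul], ?_⟩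
  intro k
  ext a b
  simp only [Matrix.smul_apply, Matrix.add_apply, Matrix.sub_apply, Matrix.diagonal_mul,
    Matrix.mul_diagonal, Matrix.sum_apply, smul_eq_mul]
  by_cases h : a = b
  · subst h
    rw [mul_comm (u a), sub_self, zero_add]
    exact Pmat_diag u C k a
  · have hub : u a - u b ≠ 0 := sub_ne_zero.mpr (fun e => h (hu e))
    have : Pmat u C (k + 1) a b
        = ((k : ℂ) * Pmat u C k a b
          - ∑ j ∈ Finset.range k, (C j * Pmat u C (k - 1 - j)) a b) / (u a - u b) := by
      rw [Pmat]; simp [h]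
    rw [this]
    field_simp
    ring
end

section
/- Let x ∈ ℂ be nonzero, n a nonzero integer, and set U° = diag(u₁, u₂) with u₁ - u₂ = x, and A the 2×2 matrix with 0 on the diagonal and 1 off the diagonal. Then there exists a polynomial matrix ψ(z) ∈ GL₂(ℂ[z]) with ψ(0) = Id satisfying z dψ/dz = (1/z)[U°, ψ(z)] - nAψ(z). Explicitly, writing D = diag(-1,1), the solution is ψ(z) = Σ_{k=0}^{|n|} ψ_k z^k with ψ_k = (∏_{j=0}^{k-1}(j² - n²))/(k!·x^k) · (Id - (k/n)A)·D^k for 1 ≤ k ≤ |n|, and ψ_k = 0 for k > |n|. -/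
/-!
The coefficients `ψ_k = c_k (1 - (k/n) A) D^k` satisfy the recursion because
`c_{k+1} / c_k = (k² - n²) / ((k + 1) x)`, and `c_k` vanishes for `k > |n|` since its product
contains the factor `|n|² - n²`; so `ψ` is a polynomial. It is invertible by Liouville's formula:
`z² (det ψ)' = tr(-n z A) det ψ = 0`, so `det ψ = det ψ(0) = 1`, and the adjugate of `ψ`, whose
coefficients are the adjugates of the `ψ_k` (the adjugate is linear on `2 × 2` matrices), is its
inverse.
-/

open Matrix Finset Polynomial

namespace Matrix

variable {R : Type*} [CommRing R]

theorem derivative_det_fin_two (M : Matrix (Fin 2) (Fin 2) R[X]) :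
    derivative M.det = trace (adjugate M * M.map derivative) := by
  simp [det_fin_two, adjugate_fin_two, trace_fin_two, vecMul, dotProduct, Fin.sum_univ_two]
  ring

theorem mul_derivative_det_fin_two {Ψ U B : Matrix (Fin 2) (Fin 2) R[X]} {f : R[X]}
    (h : f • Ψ.map derivative = U * Ψ - Ψ * U + B * Ψ) :
    f * derivative Ψ.det = trace B * Ψ.det := by
  have h_left (M : Matrix (Fin 2) (Fin 2) R[X]) :
      trace (adjugate Ψ * (M * Ψ)) = trace M * Ψ.det := by
    rw [trace_mul_comm, mul_assoc, mul_adjugate, mul_smul_comm, mul_one, trace_smul,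
      smul_eq_mul, mul_comm]
  have h_right : trace (adjugate Ψ * (Ψ * U)) = trace U * Ψ.det := by
    rw [← mul_assoc, adjugate_mul, smul_mul_assoc, one_mul, trace_smul, smul_eq_mul, mul_comm]
  calc f * derivative Ψ.det = trace (adjugate Ψ * (f • Ψ.map derivative)) := by
        rw [derivative_det_fin_two, mul_smul_comm, trace_smul, smul_eq_mul]
    _ = trace B * Ψ.det := by
        rw [h, mul_add, mul_sub, trace_add, trace_sub, h_left, h_left, h_right, sub_self,
          zero_add]

theorem coeff_matPolyEquiv_adjugate_fin_two (M : Matrix (Fin 2) (Fin 2) R[X]) (k : ℕ) :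
    (matPolyEquiv M.adjugate).coeff k = ((matPolyEquiv M).coeff k).adjugate := by
  ext i j
  fin_cases i <;> fin_cases j <;> simp [adjugate_fin_two]

theorem matPolyEquiv_map_derivative {ι : Type*} [Fintype ι] [DecidableEq ι]
    (M : Matrix ι ι R[X]) :
    matPolyEquiv (M.map derivative) = derivative (matPolyEquiv M) := by
  ext k i j
  rw [coeff_derivative, ← Nat.cast_succ, ← nsmul_eq_mul']
  simp [coeff_derivative, mul_comm]

end Matrix

theorem Polynomial.coeff_X_sq_mul_derivative_succ {R : Type*} [Semiring R] (p : R[X]) (k : ℕ) :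
    (X ^ 2 * derivative p).coeff (k + 1) = k • p.coeff k := by
  rcases k with _ | k
  · simp [coeff_X_pow_mul']
  · rw [show k + 1 + 1 = k + 2 by rfl, coeff_X_pow_mul, coeff_derivative, nsmul_eq_mul']
    push_cast
    rfl

section Solution

variable (n : ℤ) (x : ℂ)

noncomputable def psiScalar (k : ℕ) : ℂ :=
  (∏ j ∈ range k, ((j : ℂ) ^ 2 - (n : ℂ) ^ 2)) / ((k.factorial : ℂ) * x ^ k)

noncomputable def psi (k : ℕ) : Matrix (Fin 2) (Fin 2) ℂ :=
  psiScalar n x k •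
    ((1 - ((k : ℂ) / (n : ℂ)) • !![(0 : ℂ), 1; 1, 0]) * !![(-1 : ℂ), 0; 0, 1] ^ k)

theorem psiScalar_succ (k : ℕ) :
    psiScalar n x (k + 1) = psiScalar n x k * (((k : ℂ) ^ 2 - (n : ℂ) ^ 2) / ((k + 1) * x)) := by
  rw [psiScalar, psiScalar, div_mul_div_comm, prod_range_succ]
  push_cast [Nat.factorial_succ]
  ring

theorem psiScalar_eq_zero {k : ℕ} (hk : n.natAbs < k) : psiScalar n x k = 0 := by
  have hroot : ((n.natAbs : ℕ) : ℂ) ^ 2 - (n : ℂ) ^ 2 = 0 := by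
    rw [sub_eq_zero, ← Int.cast_natCast, ← Int.cast_pow, Int.natAbs_sq, Int.cast_pow]
  rw [psiScalar, prod_eq_zero (mem_range.2 hk) hroot, zero_div]

theorem psi_eq_smul (k : ℕ) :
    psi n x k = psiScalar n x k •
      !![(-1) ^ k, -((k : ℂ) / n); -((k : ℂ) / n) * (-1) ^ k, 1] := by
  have hD : !![(-1 : ℂ), 0; 0, 1] ^ k = !![(-1) ^ k, 0; 0, 1] := by
    have h := diagonal_fin_two ![(-1 : ℂ), 1]
    simp only [cons_val_zero, cons_val_one] at h
    rw [← h, diagonal_pow, diagonal_fin_two]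
    simp
  rw [psi, hD, one_fin_two]
  congr 1
  ext i j
  fin_cases i <;> fin_cases j <;> simp

theorem psi_zero : psi n x 0 = 1 := by simp [psi, psiScalar]

theorem psi_eq_zero {k : ℕ} (hk : n.natAbs < k) : psi n x k = 0 := by
  rw [psi, psiScalar_eq_zero n x hk, zero_smul]

noncomputable def psiPoly : (Matrix (Fin 2) (Fin 2) ℂ)[X] :=
  ∑ k ∈ range (n.natAbs + 1), monomial k (psi n x k)

noncomputable def psiMatrix : Matrix (Fin 2) (Fin 2) ℂ[X] := matPolyEquiv.symm (psiPoly n x)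

theorem coeff_psiPoly (k : ℕ) : (psiPoly n x).coeff k = psi n x k := by
  rw [psiPoly, finsetSum_coeff]
  simp only [coeff_monomial, sum_ite_eq', mem_range]
  split_ifs with hk
  · rfl
  · exact (psi_eq_zero n x (by omega)).symm

theorem coeff_matPolyEquiv_psiMatrix (k : ℕ) :
    (matPolyEquiv (psiMatrix n x)).coeff k = psi n x k := by
  rw [psiMatrix, AlgEquiv.apply_symm_apply, coeff_psiPoly]

variable {n x} {u₁ u₂ : ℂ} (hx : x ≠ 0) (hux : u₁ - u₂ = x) (hn : n ≠ 0)
include hx hux hn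

theorem psi_recursion (k : ℕ) :
    !![u₁, 0; 0, u₂] * psi n x (k + 1) - psi n x (k + 1) * !![u₁, 0; 0, u₂]
      = ((n : ℂ) • !![(0 : ℂ), 1; 1, 0] + (k : ℂ) • (1 : Matrix (Fin 2) (Fin 2) ℂ))
          * psi n x k := by
  have hn' : (n : ℂ) ≠ 0 := Int.cast_ne_zero.2 hn
  have hk : (k : ℂ) + 1 ≠ 0 := Nat.cast_add_one_ne_zero k
  have hu : u₁ - u₂ ≠ 0 := hux ▸ hx
  rw [psi_eq_smul, psi_eq_smul, psiScalar_succ, ← hux]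
  ext i j
  fin_cases i <;> fin_cases j <;> simp [one_fin_two] <;> field_simp <;> ring

theorem psiMatrix_ode :
    (X ^ 2 : ℂ[X]) • (psiMatrix n x).map derivative
      = !![u₁, 0; 0, u₂].map C * psiMatrix n x - psiMatrix n x * !![u₁, 0; 0, u₂].map C
        - (X : ℂ[X]) • ((n : ℂ) • !![(0 : ℂ), 1; 1, 0]).map C * psiMatrix n x := by
  apply matPolyEquiv.injective
  ext m : 1
  simp only [map_sub, map_mul, matPolyEquiv_map_smul, matPolyEquiv_map_C,
    matPolyEquiv_map_derivative, Polynomial.map_pow, map_X]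
  rcases m with _ | k
  · simp [coeff_matPolyEquiv_psiMatrix, psi_zero]
  · rw [coeff_X_sq_mul_derivative_succ, coeff_sub, coeff_sub, coeff_C_mul, coeff_mul_C,
      mul_assoc, coeff_X_mul, coeff_C_mul, coeff_matPolyEquiv_psiMatrix,
      coeff_matPolyEquiv_psiMatrix, psi_recursion hx hux hn k, add_mul, add_sub_cancel_left,
      smul_mul_assoc, one_mul, Nat.cast_smul_eq_nsmul]

theorem det_psiMatrix : (psiMatrix n x).det = 1 := by
  have hode := psiMatrix_ode hx hux hn
  rw [sub_eq_add_neg _ (_ * _), ← neg_mul] at hode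
  have hliouville := mul_derivative_det_fin_two hode
  have htrace : trace (-((X : ℂ[X]) • ((n : ℂ) • !![(0 : ℂ), 1; 1, 0]).map C)) = 0 := by
    simp [trace_fin_two]
  rw [htrace, zero_mul] at hliouville
  have hconst := eq_C_of_derivative_eq_zero
    ((mul_eq_zero.1 hliouville).resolve_left (pow_ne_zero 2 X_ne_zero))
  rw [hconst, coeff_zero_eq_eval_zero, eval_det, scalar_apply, diagonal_zero,
    ← coeff_zero_eq_eval_zero, coeff_matPolyEquiv_psiMatrix, psi_zero, det_one, C_1]

theorem sum_psi_mul_adjugate (m : ℕ) :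
    ∑ j ∈ range (m + 1), psi n x j * (psi n x (m - j)).adjugate = if m = 0 then 1 else 0 := by
  have h := congrArg (fun P => (matPolyEquiv P).coeff m) (mul_adjugate (psiMatrix n x))
  simp only [det_psiMatrix hx hux hn, one_smul, map_one, coeff_one, map_mul, coeff_mul] at h
  rw [← h, Nat.sum_antidiagonal_eq_sum_range_succ_mk]
  simp only [coeff_matPolyEquiv_adjugate_fin_two, coeff_matPolyEquiv_psiMatrix]

end Solution

/-- For `x ≠ 0`, `n ∈ ℤ \ {0}`, `U° = diag(u₁,u₂)` with `u₁ - u₂ = x` and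
`A = [[0,1],[1,0]]`, there is `ψ(z) = Σ_k ψ_k z^k ∈ GL₂(ℂ[z])` with `ψ(0) = Id` solving
`z dψ/dz = (1/z)[U°,ψ] - nAψ`, i.e. `[U°,ψ_{k+1}] = (nA + k·Id)ψ_k` for all `k ≥ 0`;
explicitly `ψ_k = (∏_{j<k}(j²-n²))/(k!·x^k) · (Id - (k/n)A)·D^k` for `1 ≤ k ≤ |n|`,
`D = diag(-1,1)`, and `ψ_k = 0` for `k > |n|`.  Invertibility in `GL₂(ℂ[z])` is stated
via a polynomial inverse `χ` with Cauchy-product `ψ·χ = Id`. -/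
theorem statement6 (u₁ u₂ x : ℂ) (hx : x ≠ 0) (hux : u₁ - u₂ = x)
    (n : ℤ) (hn : n ≠ 0) :
    ∃ ψ χ : ℕ → Matrix (Fin 2) (Fin 2) ℂ,
      ψ 0 = 1 ∧
      -- the differential equation, coefficientwise
      (∀ k : ℕ,
        !![u₁, 0; 0, u₂] * ψ (k + 1) - ψ (k + 1) * !![u₁, 0; 0, u₂]
          = ((n : ℂ) • !![(0:ℂ), 1; 1, 0] + (k : ℂ) • (1 : Matrix (Fin 2) (Fin 2) ℂ))
              * ψ k) ∧
      -- the explicit formula for the coefficients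
      (∀ k : ℕ, 1 ≤ k → k ≤ n.natAbs →
        ψ k = ((∏ j ∈ Finset.range k, ((j : ℂ) ^ 2 - (n : ℂ) ^ 2))
                / ((k.factorial : ℂ) * x ^ k)) •
              ((1 - ((k : ℂ) / (n : ℂ)) • !![(0:ℂ), 1; 1, 0])
                * !![(-1 : ℂ), 0; 0, 1] ^ k)) ∧
      (∀ k : ℕ, n.natAbs < k → ψ k = 0) ∧
      -- ψ is invertible as a polynomial matrix (element of GL₂(ℂ[z]))
      (∃ N : ℕ, ∀ k, N < k → χ k = 0) ∧
      (∀ m : ℕ, ∑ j ∈ Finset.range (m + 1), ψ j * χ (m - j)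
          = if m = 0 then 1 else 0) := by
  refine ⟨psi n x, fun k => (psi n x k).adjugate, psi_zero n x, psi_recursion hx hux hn,
    fun k _ _ => rfl, fun k => psi_eq_zero n x,
    ⟨n.natAbs, fun k hk => by simp only [psi_eq_zero n x hk, adjugate_zero]⟩,
    sum_psi_mul_adjugate hx hux hn⟩
end

section
/- Let U° = diag(u₁,u₂) with x = u₁ - u₂ ≠ 0, n a nonzero integer, A = [[0,1],[1,0]]. Any two polynomial solutions ψ, ψ' ∈ GL₂(ℂ[z]) of z dψ/dz = (1/z)[U°, ψ] - nAψ differ by right multiplication by a constant invertible diagonal matrix: ψ' = ψ·δ with δ diagonal, constant, invertible. In particular the constant term ψ(0) of any such solution is diagonal. -/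
/-!
Since `U° = diagonal ![u₁, u₂]` has distinct eigenvalues, `[U°, M]` only sees the off-diagonal
part of `M`, scaled by `±(u₁ - u₂)`. Hence the recursion determines the off-diagonal part of
`ψₖ₊₁` from `ψₖ`; as `nA` has zero diagonal, the diagonal part of the next equation, read at
`k + 1 ≠ 0`, then determines the diagonal of `ψₖ₊₁`. So a solution is fixed by `ψ₀`, which is
diagonal and invertible. Right multiplication by a constant diagonal matrix preserves solutions, so
`ψ' - ψ ψ₀⁻¹ ψ'₀` is a solution with vanishing constant term, hence zero.
-/

namespace Matrix

variable {m K : Type*} [Fintype m] [DecidableEq m]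

theorem diagonal_mul_sub_mul_diagonal_apply [CommRing K] (d : m → K) (M : Matrix m m K)
    (i j : m) : (diagonal d * M - M * diagonal d) i j = (d i - d j) * M i j := by
  rw [sub_apply, diagonal_mul, mul_diagonal, sub_mul, mul_comm (M i j)]

theorem isDiag_of_commute_diagonal_s8 [CommRing K] [IsDomain K] {d : m → K}
    (hd : Function.Injective d) {M : Matrix m m K} (h : Commute (diagonal d) M) :
    M.IsDiag := by
  intro i j hij
  have hij' : (d i - d j) * M i j = 0 := by
    rw [← diagonal_mul_sub_mul_diagonal_apply, h.eq, sub_self, zero_apply]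
  exact (mul_eq_zero.mp hij').resolve_left (sub_ne_zero.mpr (hd.ne hij))

theorem exists_isUnit_diagonal_eq_of_commute_diagonal [CommRing K] [IsDomain K] {d : m → K}
    (hd : Function.Injective d) {M : Matrix m m K} (h : Commute (diagonal d) M)
    (hM : IsUnit M) : ∃ a : m → K, IsUnit a ∧ M = diagonal a := by
  have hM' : M = diagonal M.diag := (isDiag_of_commute_diagonal_s8 hd h).diagonal_diag.symm
  exact ⟨M.diag, isUnit_diagonal.mp (hM' ▸ hM), hM'⟩

/-- The coefficientwise form, for `ψ = ∑ ψₖ zᵏ`, of `z dψ/dz = z⁻¹ [diagonal d, ψ] - B ψ`,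
without the `z⁻¹` coefficient `[diagonal d, ψ₀] = 0`. -/
def IsFormalSolution [CommRing K] (d : m → K) (B : Matrix m m K) (ψ : ℕ → Matrix m m K) :
    Prop :=
  ∀ k : ℕ, diagonal d * ψ (k + 1) - ψ (k + 1) * diagonal d = (B + (k : K) • 1) * ψ k

namespace IsFormalSolution

variable [CommRing K] {d : m → K} {B : Matrix m m K} {ψ φ : ℕ → Matrix m m K}

theorem sub (hψ : IsFormalSolution d B ψ) (hφ : IsFormalSolution d B φ) :
    IsFormalSolution d B (ψ - φ) := by
  intro k
  simp only [Pi.sub_apply, mul_sub, sub_mul, ← hψ k, ← hφ k]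
  abel

theorem mul_diagonal (hψ : IsFormalSolution d B ψ) (e : m → K) :
    IsFormalSolution d B (fun k ↦ ψ k * diagonal e) := by
  intro k
  calc diagonal d * (ψ (k + 1) * diagonal e) - ψ (k + 1) * diagonal e * diagonal d
      = (diagonal d * ψ (k + 1) - ψ (k + 1) * diagonal d) * diagonal e := by
        rw [sub_mul, mul_assoc, mul_assoc, mul_assoc, (commute_diagonal e d).eq]
    _ = (B + (k : K) • 1) * (ψ k * diagonal e) := by rw [hψ k, mul_assoc]

theorem eq_zero_of_eq_zero [IsDomain K] [CharZero K] (hd : Function.Injective d)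
    (hB : ∀ i, B i i = 0) (hψ : IsFormalSolution d B ψ) (h0 : ψ 0 = 0) (k : ℕ) :
    ψ k = 0 := by
  induction k with
  | zero => exact h0
  | succ k ih =>
    have hcomm : Commute (diagonal d) (ψ (k + 1)) :=
      sub_eq_zero.mp (by rw [hψ k, ih, mul_zero])
    have hdiag : ψ (k + 1) = diagonal (ψ (k + 1)).diag :=
      (isDiag_of_commute_diagonal_s8 hd hcomm).diagonal_diag.symm
    suffices (ψ (k + 1)).diag = 0 by rw [hdiag, this]; exact diagonal_zero
    funext i
    have hii := congrFun₂ (hψ (k + 1)) i i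
    rw [diagonal_mul_sub_mul_diagonal_apply, sub_self, zero_mul, hdiag, Matrix.mul_diagonal,
      add_apply, hB, smul_apply, one_apply_eq] at hii
    simpa [Nat.cast_add_one_ne_zero] using hii.symm

end IsFormalSolution

end Matrix

open Matrix

theorem statement8_general (u₁ u₂ x : ℂ) (hx : x ≠ 0) (hux : u₁ - u₂ = x)
    (n : ℤ)
    (ψ ψ' χ χ' : ℕ → Matrix (Fin 2) (Fin 2) ℂ)
    -- both solve the equation (including the z⁻¹ coefficient)
    (h0 : !![u₁, 0; 0, u₂] * ψ 0 - ψ 0 * !![u₁, 0; 0, u₂] = 0)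
    (h0' : !![u₁, 0; 0, u₂] * ψ' 0 - ψ' 0 * !![u₁, 0; 0, u₂] = 0)
    (hrec : ∀ k : ℕ,
      !![u₁, 0; 0, u₂] * ψ (k + 1) - ψ (k + 1) * !![u₁, 0; 0, u₂]
        = ((n : ℂ) • !![(0:ℂ), 1; 1, 0] + (k : ℂ) • 1) * ψ k)
    (hrec' : ∀ k : ℕ,
      !![u₁, 0; 0, u₂] * ψ' (k + 1) - ψ' (k + 1) * !![u₁, 0; 0, u₂]
        = ((n : ℂ) • !![(0:ℂ), 1; 1, 0] + (k : ℂ) • 1) * ψ' k)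
    -- invertibility in GL₂(ℂ[z])
    (hinv : ∀ m : ℕ, ∑ j ∈ Finset.range (m + 1), ψ j * χ (m - j)
        = if m = 0 then 1 else 0)
    (hinv' : ∀ m : ℕ, ∑ j ∈ Finset.range (m + 1), ψ' j * χ' (m - j)
        = if m = 0 then 1 else 0) :
    (∃ δ : Matrix (Fin 2) (Fin 2) ℂ, IsUnit δ ∧ (∀ i j, i ≠ j → δ i j = 0) ∧
      ∀ k, ψ' k = ψ k * δ) ∧
    (∀ i j, i ≠ j → ψ 0 i j = 0) := by
  rw [← diagonal_vec2] at h0 h0' hrec hrec'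
  have hd : Function.Injective ![u₁, u₂] := injective_pair_iff_ne.mpr (sub_ne_zero.mp (hux ▸ hx))
  have hB : ∀ i, ((n : ℂ) • !![(0 : ℂ), 1; 1, 0]) i i = 0 := by
    intro i; fin_cases i <;> simp
  obtain ⟨a, ha, hψ₀⟩ := exists_isUnit_diagonal_eq_of_commute_diagonal hd (sub_eq_zero.mp h0)
    (IsUnit.of_mul_eq_one (χ 0) (by simpa using hinv 0))
  obtain ⟨a', ha', hψ'₀⟩ := exists_isUnit_diagonal_eq_of_commute_diagonal hd (sub_eq_zero.mp h0')
    (IsUnit.of_mul_eq_one (χ' 0) (by simpa using hinv' 0))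
  have hdiff : ∀ k, ψ' k - ψ k * diagonal (a' / a) = 0 :=
    (IsFormalSolution.sub hrec' (IsFormalSolution.mul_diagonal hrec (a' / a))).eq_zero_of_eq_zero
      hd hB <| by
        rw [hψ₀, hψ'₀, diagonal_mul_diagonal, sub_eq_zero]
        exact congrArg diagonal (ha.mul_div_cancel a').symm
  exact ⟨⟨diagonal (a' / a), isUnit_diagonal.mpr (ha'.div ha), isDiag_diagonal _,
    fun k ↦ sub_eq_zero.mp (hdiff k)⟩, hψ₀ ▸ isDiag_diagonal a⟩

/-- Any two polynomial solutions `ψ, ψ' ∈ GL₂(ℂ[z])` of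
`z dψ/dz = (1/z)[U°,ψ] - nAψ` (with `U° = diag(u₁,u₂)`, `u₁ - u₂ = x ≠ 0`, `n ≠ 0`,
`A = [[0,1],[1,0]]`) differ by right multiplication by a constant invertible diagonal
matrix `δ`: `ψ'_k = ψ_k·δ` for all `k`.  In particular the constant term `ψ(0)` of any
such solution is diagonal.  The equation is encoded coefficientwise as
`[U°,ψ_{k+1}] = (nA + k·Id)ψ_k` (with the `z⁻¹` condition `[U°,ψ₀] = 0`), polynomiality
as eventual vanishing of coefficients, and invertibility via polynomial Cauchy-product
inverses. -/
theorem statement8 (u₁ u₂ x : ℂ) (hx : x ≠ 0) (hux : u₁ - u₂ = x)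
    (n : ℤ) (hn : n ≠ 0)
    (ψ ψ' χ χ' : ℕ → Matrix (Fin 2) (Fin 2) ℂ)
    -- both are polynomials
    (hpoly : ∃ N : ℕ, ∀ k, N < k → ψ k = 0 ∧ ψ' k = 0 ∧ χ k = 0 ∧ χ' k = 0)
    -- both solve the equation (including the z⁻¹ coefficient)
    (h0 : !![u₁, 0; 0, u₂] * ψ 0 - ψ 0 * !![u₁, 0; 0, u₂] = 0)
    (h0' : !![u₁, 0; 0, u₂] * ψ' 0 - ψ' 0 * !![u₁, 0; 0, u₂] = 0)
    (hrec : ∀ k : ℕ,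
      !![u₁, 0; 0, u₂] * ψ (k + 1) - ψ (k + 1) * !![u₁, 0; 0, u₂]
        = ((n : ℂ) • !![(0:ℂ), 1; 1, 0] + (k : ℂ) • 1) * ψ k)
    (hrec' : ∀ k : ℕ,
      !![u₁, 0; 0, u₂] * ψ' (k + 1) - ψ' (k + 1) * !![u₁, 0; 0, u₂]
        = ((n : ℂ) • !![(0:ℂ), 1; 1, 0] + (k : ℂ) • 1) * ψ' k)
    -- invertibility in GL₂(ℂ[z])
    (hinv : ∀ m : ℕ, ∑ j ∈ Finset.range (m + 1), ψ j * χ (m - j)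
        = if m = 0 then 1 else 0)
    (hinv' : ∀ m : ℕ, ∑ j ∈ Finset.range (m + 1), ψ' j * χ' (m - j)
        = if m = 0 then 1 else 0) :
    (∃ δ : Matrix (Fin 2) (Fin 2) ℂ, IsUnit δ ∧ (∀ i j, i ≠ j → δ i j = 0) ∧
      ∀ k, ψ' k = ψ k * δ) ∧
    (∀ i j, i ≠ j → ψ 0 i j = 0) :=
  statement8_general u₁ u₂ x hx hux n ψ ψ' χ χ' h0 h0' hrec hrec' hinv hinv'
end

section
/- Let the recursion [U°, ψ_{k+1}] = (nA + k·Id)ψ_k hold for 2×2 matrices ψ_k with ψ₀ = Id, where U° = diag(u₁,u₂), x = u₁-u₂ ≠ 0, n ∈ ℤ, n ≠ 0, A = [[0,1],[1,0]]. If ψ_k = c_k(Id - (k/n)A)D^k with D = diag(-1,1) and c_k = (∏_{j=0}^{k-1}(j²-n²))/(k!·x^k), then (nA + |n|·Id)ψ_{|n|} = 0; hence the recursion can be continued with ψ_k = 0 for all k > |n|, yielding a polynomial solution of degree |n|. -/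
/-! Since `A² = 1` and `|n|² = n²`, the factor `Id - (|n|/n) A` of `ψ_{|n|}` is annihilated by
`nA + |n| Id`; once `ψ_{|n|}` is annihilated, `ψ_k = 0` for `k > |n|` satisfies the recursion. -/

theorem smul_add_smul_one_mul_one_sub_smul_eq_zero {K R : Type*} [Field K] [Ring R] [Algebra K R]
    {a : R} (ha : a * a = 1) {n m : K} (hn : n ≠ 0) (hmn : m ^ 2 = n ^ 2) :
    (n • a + m • (1 : R)) * (1 - (m / n) • a) = 0 := by
  simp only [add_mul, mul_sub, mul_one, one_mul, smul_mul_assoc, mul_smul_comm, ha]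
  match_scalars
  · field_simp
    linear_combination -hmn
  · field_simp
    ring

theorem Int.natCast_natAbs_sq {R : Type*} [Ring R] (n : ℤ) : (n.natAbs : R) ^ 2 = (n : R) ^ 2 := by
  rw [← Int.cast_natCast, ← Int.cast_pow, Int.natAbs_sq, Int.cast_pow]

theorem statement9_general (u₁ u₂ x : ℂ)
    (n : ℤ) (hn : n ≠ 0)
    (ψ : ℕ → Matrix (Fin 2) (Fin 2) ℂ)
    (hψ : ∀ k : ℕ, 1 ≤ k → k ≤ n.natAbs →
      ψ k = ((∏ j ∈ Finset.range k, ((j : ℂ) ^ 2 - (n : ℂ) ^ 2))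
              / ((k.factorial : ℂ) * x ^ k)) •
            ((1 - ((k : ℂ) / (n : ℂ)) • !![(0:ℂ), 1; 1, 0])
              * !![(-1 : ℂ), 0; 0, 1] ^ k))
    (hψtail : ∀ k : ℕ, n.natAbs < k → ψ k = 0) :
    ((n : ℂ) • !![(0:ℂ), 1; 1, 0] + (n.natAbs : ℂ) • (1 : Matrix (Fin 2) (Fin 2) ℂ))
        * ψ n.natAbs = 0 ∧
    ∀ k : ℕ, n.natAbs ≤ k →
      !![u₁, 0; 0, u₂] * ψ (k + 1) - ψ (k + 1) * !![u₁, 0; 0, u₂]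
        = ((n : ℂ) • !![(0:ℂ), 1; 1, 0] + (k : ℂ) • 1) * ψ k := by
  have hswap : !![(0:ℂ), 1; 1, 0] * !![(0:ℂ), 1; 1, 0] = 1 := by
    simp [Matrix.one_fin_two]
  have hkill : ((n : ℂ) • !![(0:ℂ), 1; 1, 0] + (n.natAbs : ℂ) • (1 : Matrix (Fin 2) (Fin 2) ℂ))
      * ψ n.natAbs = 0 := by
    rw [hψ _ (Int.natAbs_pos.mpr hn) le_rfl, Matrix.mul_smul, ← Matrix.mul_assoc,
      smul_add_smul_one_mul_one_sub_smul_eq_zero hswap (Int.cast_ne_zero.mpr hn)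
        (Int.natCast_natAbs_sq n), Matrix.zero_mul, smul_zero]
  refine ⟨hkill, fun k hk => ?_⟩
  rw [hψtail (k + 1) (by omega), Matrix.mul_zero, Matrix.zero_mul, sub_zero]
  rcases hk.eq_or_lt with rfl | hlt
  · exact hkill.symm
  · rw [hψtail k hlt, Matrix.mul_zero]

/-- With `U° = diag(u₁,u₂)`, `x = u₁ - u₂ ≠ 0`, `0 ≠ n ∈ ℤ`,
`A = [[0,1],[1,0]]`, `D = diag(-1,1)` and
`ψ_k = (∏_{j<k}(j²-n²))/(k!·x^k) · (Id - (k/n)A)·D^k`, one has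
`(nA + |n|·Id)·ψ_{|n|} = 0`; hence the recursion `[U°,ψ_{k+1}] = (nA + k·Id)ψ_k`
can be continued with `ψ_k = 0` for `k > |n|`, yielding a polynomial solution of
degree `|n|`. -/
theorem statement9 (u₁ u₂ x : ℂ) (hx : x ≠ 0) (hux : u₁ - u₂ = x)
    (n : ℤ) (hn : n ≠ 0)
    (ψ : ℕ → Matrix (Fin 2) (Fin 2) ℂ)
    (hψ0 : ψ 0 = 1)
    (hψ : ∀ k : ℕ, 1 ≤ k → k ≤ n.natAbs →
      ψ k = ((∏ j ∈ Finset.range k, ((j : ℂ) ^ 2 - (n : ℂ) ^ 2))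
              / ((k.factorial : ℂ) * x ^ k)) •
            ((1 - ((k : ℂ) / (n : ℂ)) • !![(0:ℂ), 1; 1, 0])
              * !![(-1 : ℂ), 0; 0, 1] ^ k))
    (hψtail : ∀ k : ℕ, n.natAbs < k → ψ k = 0) :
    ((n : ℂ) • !![(0:ℂ), 1; 1, 0] + (n.natAbs : ℂ) • (1 : Matrix (Fin 2) (Fin 2) ℂ))
        * ψ n.natAbs = 0 ∧
    ∀ k : ℕ, n.natAbs ≤ k →
      !![u₁, 0; 0, u₂] * ψ (k + 1) - ψ (k + 1) * !![u₁, 0; 0, u₂]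
        = ((n : ℂ) • !![(0:ℂ), 1; 1, 0] + (k : ℂ) • 1) * ψ k :=
  statement9_general u₁ u₂ x n hn ψ hψ hψtail
end

section
/- Let C⁽ⁱ⁾ denote the n×n matrix whose (j,k) entry is δ_{ik}δ_{jk} (i.e., the elementary diagonal matrix E_{ii}), and let K ∈ GL_n(ℂ). If [C⁽ⁱ⁾, K̄·C⁽ʲ⁾·K] = 0 for all i, j, then for every i there is exactly one index jᵢ with K_{i,jᵢ} ≠ 0 and K_{jᵢ,i} ≠ 0. -/
open Matrix

/-!
The `(a, b)` entry of `K̄ C⁽ʲ⁾ K` is `conj (K a j) * K j b`, and a matrix commuting with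
`C⁽ᵃ⁾` has vanishing off-diagonal entries in row `a`. Hence `K a j ≠ 0` and `K j b ≠ 0`
force `a = b`: the support of column `j` times the support of row `j` lies on the diagonal.
An invertible `K` has no zero row or column, so if `K i b ≠ 0` then every nonzero entry of
column `i` sits in row `b`, which makes `b` the unique index in question.
-/

namespace Matrix

variable {n R : Type*}

theorem existsUnique_apply_ne_zero_and_apply_ne_zero [Zero R] {K : Matrix n n R}
    (hrow : ∀ i, ∃ j, K i j ≠ 0) (hcol : ∀ j, ∃ i, K i j ≠ 0)
    (hsupp : ∀ {a j b : n}, K a j ≠ 0 → K j b ≠ 0 → a = b) (i : n) :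
    ∃! j, K i j ≠ 0 ∧ K j i ≠ 0 := by
  obtain ⟨b, hib⟩ := hrow i
  obtain ⟨a, hai⟩ := hcol i
  obtain rfl : a = b := hsupp hai hib
  exact ⟨a, ⟨hib, hai⟩, fun j ⟨_, hji⟩ => hsupp hji hib⟩

variable [Fintype n] [DecidableEq n]

theorem mul_single_one_mul_apply [Semiring R] (A B : Matrix n n R) (j a b : n) :
    (A * single j j (1 : R) * B) a b = A a j * B j b := by
  simp [mul_apply, single, ite_and]

theorem exists_row_apply_ne_zero_of_isUnit [CommRing R] [Nontrivial R] {K : Matrix n n R}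
    (hK : IsUnit K) (i : n) : ∃ j, K i j ≠ 0 := by
  by_contra! h
  exact ((isUnit_iff_isUnit_det K).mp hK).ne_zero (det_eq_zero_of_row_eq_zero i h)

theorem exists_col_apply_ne_zero_of_isUnit [CommRing R] [Nontrivial R] {K : Matrix n n R}
    (hK : IsUnit K) (j : n) : ∃ i, K i j ≠ 0 := by
  by_contra! h
  exact ((isUnit_iff_isUnit_det K).mp hK).ne_zero (det_eq_zero_of_column_eq_zero j h)

theorem eq_of_commute_single_map_star_mul_single_mul [CommRing R] [StarRing R]
    [NoZeroDivisors R] {K : Matrix n n R}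
    (hcomm : ∀ i j : n, Commute (single i i (1 : R)) (K.map (starRingEnd R) * single j j 1 * K))
    {a j b : n} (haj : K a j ≠ 0) (hjb : K j b ≠ 0) : a = b := by
  by_contra hab
  have hzero := row_eq_zero_of_commute_single (hcomm a j) (Ne.symm hab)
  rw [mul_single_one_mul_apply, map_apply, starRingEnd_apply] at hzero
  exact mul_ne_zero (star_ne_zero.mpr haj) hjb hzero

end Matrix

/-- Let `C⁽ⁱ⁾ = E_{ii}` be the elementary diagonal matrices and
`K ∈ GL_n(ℂ)`.  If `[C⁽ⁱ⁾, K̄·C⁽ʲ⁾·K] = 0` for all `i, j`, then for every `i` there is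
exactly one index `j` with `K i j ≠ 0` and `K j i ≠ 0`. -/
theorem statement12 {n : ℕ} (K : Matrix (Fin n) (Fin n) ℂ) (hK : IsUnit K)
    (hcomm : ∀ i j : Fin n,
      Matrix.single i i (1 : ℂ)
          * (K.map (starRingEnd ℂ) * Matrix.single j j (1 : ℂ) * K)
        = (K.map (starRingEnd ℂ) * Matrix.single j j (1 : ℂ) * K)
          * Matrix.single i i (1 : ℂ)) :
    ∀ i : Fin n, ∃! j : Fin n, K i j ≠ 0 ∧ K j i ≠ 0 :=
  existsUnique_apply_ne_zero_and_apply_ne_zero (exists_row_apply_ne_zero_of_isUnit hK)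
    (exists_col_apply_ne_zero_of_isUnit hK) (eq_of_commute_single_map_star_mul_single_mul hcomm)
end
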